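/- Let {X_α} be an inverse system of schemes indexed by a directed poset, with affine surjective transition morphisms ρ_{α,β} : X_α → X_β. If every X_α is a nonempty quasi-compact scheme, then the limit X = lim X_α is nonempty and each canonical projection ρ_α : X → X_α is surjective. -/

import Mathlib

/-!
To lift a point `x ∈ X_i` to the limit, look at the fibres `X_j ×_{X_i} Spec κ(x)` over all
`j → i`. They form a cofiltered diagram of schemes which are affine, because the transition
maps are affine, and nonempty, because the transition maps are surjective. Hence the limit of
the fibres is nonempty (Stacks 01Z2, `Scheme.nonempty_of_isLimit`), and it maps into the
limit of the `X_j` onto the point `x`.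
-/

open AlgebraicGeometry CategoryTheory CategoryTheory.Limits

namespace AlgebraicGeometry

variable {I : Type u} [Category.{u} I] (D : I ⥤ Scheme.{u})

lemma Scheme.hasLimit_of_isAffine [∀ i, IsAffine (D.obj i)] : HasLimit D := by
  let D' : I ⥤ AffineScheme.{u} := ObjectProperty.lift _ D fun i ↦ essImage_Spec.mpr inferInstance
  exact hasLimit_of_iso (F := D' ⋙ AffineScheme.forgetToScheme) (ObjectProperty.liftCompιIso _ D _)

variable {i : I} (x : D.obj i)

/-- The `j`-th object is the fibre `D.obj j.left ×_{D.obj i} Spec κ(x)` of `D.map j.hom`. -/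
noncomputable def Scheme.fiberDiagram : Over i ⥤ Scheme.{u} :=
  Over.post D ⋙ Over.pullback ((D.obj i).fromSpecResidueField x) ⋙ Over.forget _

noncomputable def Scheme.fiberDiagramFst : Scheme.fiberDiagram D x ⟶ Over.forget i ⋙ D :=
  Functor.whiskerLeft (Over.post D)
    (Functor.whiskerRight (Over.mapPullbackAdj _).counit (Over.forget _))

instance [∀ {i j} (f : i ⟶ j), IsAffineHom (D.map f)] (j : Over i) :
    IsAffine ((Scheme.fiberDiagram D x).obj j) :=
  inferInstanceAs (IsAffine (pullback (D.map j.hom) _))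

instance [∀ {i j} (f : i ⟶ j), Surjective (D.map f)] (j : Over i) :
    Nonempty ((Scheme.fiberDiagram D x).obj j) := by
  obtain ⟨q⟩ : Nonempty (Spec ((D.obj i).residueField x)) := inferInstance
  obtain ⟨y, -⟩ := (pullback.snd (D.map j.hom) ((D.obj i).fromSpecResidueField x)).surjective q
  exact ⟨y⟩

lemma Scheme.fiberDiagramFst_app_comp_map_hom_apply (j : Over i)
    (y : (fiberDiagram D x).obj j) : ((fiberDiagramFst D x).app j ≫ D.map j.hom).base y = x := by
  have h : (fiberDiagramFst D x).app j ≫ D.map j.hom =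
      pullback.snd (D.map j.hom) _ ≫ (D.obj i).fromSpecResidueField x :=
    Over.w ((Over.mapPullbackAdj _).counit.app ((Over.post D).obj j))
  rw [h]
  exact Scheme.fromSpecResidueField_apply x _

theorem Scheme.surjective_π_app_of_isLimit [IsCofiltered I]
    [∀ {i j} (f : i ⟶ j), IsAffineHom (D.map f)] [∀ {i j} (f : i ⟶ j), Surjective (D.map f)]
    {c : Cone D} (hc : IsLimit c) (i : I) : Surjective (c.π.app i) := by
  refine ⟨fun x ↦ ?_⟩
  have := hasLimit_of_isAffine (fiberDiagram D x)
  obtain ⟨p⟩ := nonempty_of_isLimit _ _ (limit.isLimit (fiberDiagram D x))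
  have hc' := (Functor.Initial.isLimitWhiskerEquiv (Over.forget i) c).symm hc
  let ℓ : limit (fiberDiagram D x) ⟶ c.pt :=
    hc'.lift ((Cone.postcompose (fiberDiagramFst D x)).obj (limit.cone _))
  have hℓ : ℓ ≫ c.π.app i =
      limit.π (fiberDiagram D x) (Over.mk (𝟙 i)) ≫ (fiberDiagramFst D x).app _ ≫ D.map (𝟙 i) :=
    calc ℓ ≫ c.π.app i = (ℓ ≫ c.π.app i) ≫ D.map (𝟙 i) := by simp
      _ = _ := by
        rw [← Category.assoc]
        exact congrArg (· ≫ D.map (𝟙 i)) (hc'.fac _ (Over.mk (𝟙 i)))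
  refine ⟨ℓ.base p, ?_⟩
  rw [← Scheme.Hom.comp_apply, hℓ, Scheme.Hom.comp_apply]
  exact fiberDiagramFst_app_comp_map_hom_apply D x (Over.mk (𝟙 i)) _

end AlgebraicGeometry

theorem statement1_general {J : Type u} [Preorder J] [IsDirected J (· ≤ ·)] [Nonempty J]
    (F : Jᵒᵖ ⥤ AlgebraicGeometry.Scheme.{u})
    (haff : ∀ {i j : Jᵒᵖ} (f : i ⟶ j), IsAffineHom (F.map f))
    (hsurj : ∀ {i j : Jᵒᵖ} (f : i ⟶ j), Function.Surjective (F.map f).base)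
    (hne : ∀ j : Jᵒᵖ, Nonempty (F.obj j))
    (c : Cone F) (hc : IsLimit c) :
    Nonempty c.pt ∧ ∀ j : Jᵒᵖ, Function.Surjective (c.π.app j).base := by
  have : ∀ {i j : Jᵒᵖ} (f : i ⟶ j), Surjective (F.map f) := fun f ↦ ⟨hsurj f⟩
  have hπ (j : Jᵒᵖ) : Function.Surjective (c.π.app j).base :=
    (Scheme.surjective_π_app_of_isLimit F hc j).surj
  obtain ⟨j⟩ : Nonempty Jᵒᵖ := inferInstance
  obtain ⟨x⟩ := hne j
  exact ⟨⟨(hπ j x).choose⟩, hπ⟩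

/-- Let `{X_α}` be an inverse system of schemes indexed by a directed
poset, with affine surjective transition morphisms.  If every `X_α` is a nonempty
quasi-compact scheme, then the limit `X = lim X_α` is nonempty and each canonical
projection `ρ_α : X → X_α` is surjective. -/
theorem statement1 {J : Type u} [Preorder J] [IsDirected J (· ≤ ·)] [Nonempty J]
    (F : Jᵒᵖ ⥤ AlgebraicGeometry.Scheme.{u})
    (haff : ∀ {i j : Jᵒᵖ} (f : i ⟶ j), IsAffineHom (F.map f))
    (hsurj : ∀ {i j : Jᵒᵖ} (f : i ⟶ j), Function.Surjective (F.map f).base)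
    (hne : ∀ j : Jᵒᵖ, Nonempty (F.obj j))
    (hqc : ∀ j : Jᵒᵖ, CompactSpace (F.obj j))
    (c : Cone F) (hc : IsLimit c) :
    Nonempty c.pt ∧ ∀ j : Jᵒᵖ, Function.Surjective (c.π.app j).base :=
  statement1_general F haff hsurj hne c hc
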